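/- arXiv:2603.28954 — 6 statements merged into one kernel-verified Lean document; each statement's English description precedes it below -/
import Mathlib

section
/- There exists a constant C > 0 such that for every integer n ≥ 1 there is a propagation-complete CNF encoding of the constraint AMO'(x_1,...,x_n; z) using at most 2n + C·√n clauses and at most C·√n auxiliary variables. -/
/-- Variables are natural numbers. -/
abbrev Var : Type := ℕ

/-- A literal is a variable together with a polarity (`true` = positive). -/
abbrev Lit : Type := Var × Bool

/-- A clause is a finite set of literals. -/
abbrev Clause : Type := Finset Lit

/-- A CNF formula is a finite set of clauses; its size is its number of clauses. -/
abbrev CNF : Type := Finset Clause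

/-- Evaluation of a literal under a (total) assignment. -/
def Lit.eval (τ : Var → Bool) (l : Lit) : Bool :=
  if l.2 then τ l.1 else !(τ l.1)

/-- The negation of a literal. -/
def Lit.negate (l : Lit) : Lit := (l.1, !l.2)

/-- An assignment satisfies a clause if it makes at least one of its literals true. -/
def Clause.sat (τ : Var → Bool) (C : Clause) : Prop :=
  ∃ l ∈ C, Lit.eval τ l = true

/-- An assignment satisfies a CNF formula if it satisfies every clause. -/
def CNF.sat (τ : Var → Bool) (φ : CNF) : Prop :=
  ∀ C ∈ φ, Clause.sat τ C

/-- The set of variables occurring in a CNF formula. -/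
def CNF.vars (φ : CNF) : Finset Var :=
  φ.sup (fun C => C.image Prod.fst)

/-- The auxiliary variables of a formula whose input variables are `0, …, n-1`. -/
def CNF.auxVars (n : ℕ) (φ : CNF) : Finset Var :=
  CNF.vars φ \ Finset.range n

/-- `φ` encodes the Boolean function `f`, where the input variables `x_1, …, x_n`
are the variables `0, …, n-1`: for every assignment `τ` of the input variables,
`f τ = ⊤` iff `τ` extends to a total assignment satisfying `φ`. -/
def Encodes (n : ℕ) (f : (Fin n → Bool) → Bool) (φ : CNF) : Prop :=
  ∀ τ : Fin n → Bool,
    f τ = true ↔ ∃ σ : Var → Bool, (∀ i : Fin n, σ i.1 = τ i) ∧ CNF.sat σ φ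

/-- The at-most-`k` constraint on `n` Boolean inputs. -/
def AtMost (k n : ℕ) (τ : Fin n → Bool) : Bool :=
  decide ((Finset.univ.filter fun i : Fin n => τ i = true).card ≤ k)

/-- The at-most-one constraint on `n` Boolean inputs. -/
def AMO (n : ℕ) : (Fin n → Bool) → Bool := AtMost 1 n

/-- Unit propagation: `ℓ` is derivable from `φ` if some clause of `φ` contains `ℓ`
and the negations of all its other literals are derivable. (Unit clauses are the
base case.) -/
inductive UnitProp (φ : CNF) : Lit → Prop where
  | step (C : Clause) (hC : C ∈ φ) (l : Lit) (hl : l ∈ C)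
      (h : ∀ l' ∈ C, l' ≠ l → UnitProp φ (Lit.negate l')) : UnitProp φ l

/-- `φ ⊢₁ ⊥`: unit propagation derives a conflict (an empty clause). -/
def UnitRefutes (φ : CNF) : Prop :=
  ∃ C ∈ φ, ∀ l ∈ C, UnitProp φ (Lit.negate l)

/-- The formula `φ ∧ ℓ_1 ∧ ⋯ ∧ ℓ_m` obtained by adding the literals of `L`
as unit clauses. -/
def withUnits (φ : CNF) (L : List Lit) : CNF :=
  φ ∪ (L.map fun l => ({l} : Clause)).toFinset

/-- Propagation completeness of an encoding whose input variables are `0, …, n-1`: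
for all literals `ℓ_1, …, ℓ_{m-1}, ℓ_m` over the input variables, if
`φ ∧ ℓ_1 ∧ ⋯ ∧ ℓ_{m-1} ⊨ ℓ_m` then unit propagation from `φ ∧ ℓ_1 ∧ ⋯ ∧ ℓ_{m-1}`
derives `ℓ_m` or a conflict. -/
def PropagationComplete (n : ℕ) (φ : CNF) : Prop :=
  ∀ (L : List Lit) (l : Lit), (∀ l' ∈ L, l'.1 < n) → l.1 < n →
    (∀ σ : Var → Bool, CNF.sat σ (withUnits φ L) → Lit.eval σ l = true) →
    (UnitProp (withUnits φ L) l ∨ UnitRefutes (withUnits φ L))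

/-- The constraint `AMO'(x_1, …, x_n; z)` on `n+1` inputs: at most one of
`x_1, …, x_n` is true, and each `x_i` implies `z`. The inputs `x_1, …, x_n` are
the first `n` coordinates and `z` is the last one. -/
def AMOz (n : ℕ) (τ : Fin (n + 1) → Bool) : Bool :=
  AMO n (fun i => τ i.castSucc) &&
    decide (∀ i : Fin n, τ i.castSucc = true → τ (Fin.last n) = true)

open Finset

/-!
Arrange the `n` inputs in a grid with `side n = ⌊√n⌋ + 1` columns. Each input implies the
indicator of its row and the indicator of its column, and the row indicators and the column
indicators each satisfy `AMO'(·; z)` through the sequential ("ladder") encoding, with `side n`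
indicators and `side n` prefix variables. Two distinct inputs differ in their row or in their
column, so the clauses encode `AMO'(x; z)` with `2n + O(√n)` clauses and `4 side n` auxiliary
variables.

For propagation completeness: a set of literals over the inputs is consistent with
`AMO'` iff no two of its literals clash (complementary literals, two positive inputs, or a positive
input together with `¬z`). The literal `ℓ` is entailed by `L` iff `L ∪ {¬ℓ}` contains a clashing
pair, and each clash between a derived literal `a` and a literal `b` lets unit propagation derive
`¬b` along one of the two ladders.
-/

@[simp] lemma Lit.eval_mk_true (σ : Var → Bool) (v : Var) : Lit.eval σ (v, true) = σ v := rfl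

@[simp] lemma Lit.eval_mk_false (σ : Var → Bool) (v : Var) : Lit.eval σ (v, false) = !σ v := rfl

@[simp] lemma Lit.eval_negate (σ : Var → Bool) (l : Lit) : Lit.eval σ l.negate = !Lit.eval σ l := by
  obtain ⟨v, _ | _⟩ := l <;> simp [Lit.eval, Lit.negate]

@[simp] lemma Lit.negate_negate (l : Lit) : l.negate.negate = l := by
  simp [Lit.negate]

lemma Clause.sat_pair {σ : Var → Bool} {a b : Lit} :
    Clause.sat σ {a, b} ↔ Lit.eval σ a = true ∨ Lit.eval σ b = true := by
  simp [Clause.sat]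

lemma CNF.sat_union {σ : Var → Bool} {φ φ' : CNF} :
    CNF.sat σ (φ ∪ φ') ↔ CNF.sat σ φ ∧ CNF.sat σ φ' := by
  simp only [CNF.sat, mem_union, or_imp, forall_and]

lemma CNF.sat_withUnits {σ : Var → Bool} {φ : CNF} {L : List Lit} (hφ : CNF.sat σ φ)
    (hL : ∀ l ∈ L, Lit.eval σ l = true) : CNF.sat σ (withUnits φ L) := by
  refine CNF.sat_union.2 ⟨hφ, fun C hC => ?_⟩
  obtain ⟨l, hl, rfl⟩ := List.mem_map.1 (List.mem_toFinset.1 hC)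
  exact ⟨l, mem_singleton_self l, hL l hl⟩

lemma CNF.vars_subset_range {φ : CNF} {m : ℕ} (h : ∀ C ∈ φ, ∀ l ∈ C, l.1 < m) :
    CNF.vars φ ⊆ range m :=
  Finset.sup_le fun C hC v hv => by
    obtain ⟨l, hl, rfl⟩ := mem_image.1 hv
    exact mem_range.2 (h C hC l hl)

namespace UnitProp

variable {ψ : CNF} {a b l : Lit}

lemma of_mem_units {φ : CNF} {L : List Lit} (h : l ∈ L) : UnitProp (withUnits φ L) l :=
  .step {l} (mem_union_right _ (List.mem_toFinset.2 (List.mem_map_of_mem h))) l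
    (mem_singleton_self l) fun _ hl' hne => absurd (mem_singleton.1 hl') hne

lemma of_pair (hC : ({a, b} : Clause) ∈ ψ) (ha : UnitProp ψ a.negate) : UnitProp ψ b :=
  .step _ hC b (by simp) fun l' hl' hne => by
    rcases mem_insert.1 hl' with rfl | hl'
    · exact ha
    · exact absurd (mem_singleton.1 hl') hne

lemma of_pair_left (hC : ({a, b} : Clause) ∈ ψ) (hb : UnitProp ψ b.negate) : UnitProp ψ a :=
  of_pair (pair_comm a b ▸ hC) hb

theorem sound {σ : Var → Bool} (hσ : CNF.sat σ ψ) (h : UnitProp ψ l) : Lit.eval σ l = true := by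
  induction h with
  | step C hC l _ _ ih =>
    obtain ⟨l', hl', hev⟩ := hσ C hC
    by_contra hne
    obtain rfl | hl'l := eq_or_ne l' l
    · exact hne hev
    · simpa [hev] using ih l' hl' hl'l

lemma unitRefutes (h : UnitProp ψ l) (hn : UnitProp ψ l.negate) : UnitRefutes ψ := by
  obtain ⟨C, hC, _, hl, hrest⟩ := h
  exact ⟨C, hC, fun l' hl' => if e : l' = l then e ▸ hn else hrest l' hl' e⟩

end UnitProp

/-- `σ` satisfies `AMO'(x_0, …, x_{n-1}; z)` for the inputs `x_i = i` and `z = n`. -/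
structure AMOz.IsModel (n : ℕ) (σ : Var → Bool) : Prop where
  amo : ∀ i < n, ∀ j < n, σ i = true → σ j = true → i = j
  imp : ∀ i < n, σ i = true → σ n = true

section Ladder

variable {n P : ℕ} {f : ℕ → ℕ} {R S : ℕ → ℕ}

/-- Inputs `x_i = i` (`i < n`) imply the indicator `R (f i)` of their class, and the indicators
`R 0, …, R (P-1)` satisfy `AMO'(R; z)` with `z = n` through the sequential encoding, in which
`S a` means that some `R b` with `b ≤ a` holds. -/
def ladder (n P : ℕ) (f : ℕ → ℕ) (R S : ℕ → ℕ) : CNF :=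
  (range n).image (fun i => {(i, false), (R (f i), true)}) ∪
  (range P).image (fun a => {(R a, false), (S a, true)}) ∪
  (range (P - 1)).image (fun a => {(S a, false), (S (a + 1), true)}) ∪
  (range (P - 1)).image (fun a => {(S a, false), (R (a + 1), false)}) ∪
  {{(S (P - 1), false), (n, true)}}

lemma card_ladder_le (hP : 0 < P) : (ladder n P f R S).card ≤ n + 3 * P := by
  unfold ladder
  refine (card_union_le _ _).trans ?_
  grw [card_union_le, card_union_le, card_union_le, card_image_le, card_image_le, card_image_le,
    card_image_le]
  simp only [card_range, card_singleton]
  omega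

lemma vars_ladder_subset {m : ℕ} (hP : 0 < P) (hn : n < m) (hf : ∀ i < n, f i < P)
    (hR : ∀ a < P, R a < m) (hS : ∀ a < P, S a < m) :
    CNF.vars (ladder n P f R S) ⊆ range m := by
  refine CNF.vars_subset_range fun C hC l hl => ?_
  simp only [ladder, mem_union, mem_image, mem_range, mem_singleton] at hC
  rcases hC with ((((⟨i, hi, rfl⟩ | ⟨a, ha, rfl⟩) | ⟨a, ha, rfl⟩) | ⟨a, ha, rfl⟩) | rfl) <;>
    simp only [mem_insert, mem_singleton] at hl <;> rcases hl with rfl | rfl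
  exacts [hn.trans' hi, hR _ (hf i hi), hR a ha, hS a ha, hS a (by omega), hS _ (by omega),
    hS a (by omega), hR _ (by omega), hS _ (by omega), hn]

lemma mem_ladder_input {i : ℕ} (hi : i < n) :
    {(i, false), (R (f i), true)} ∈ ladder n P f R S := by
  simp only [ladder, mem_union, mem_image, mem_range]
  exact Or.inl <| Or.inl <| Or.inl <| Or.inl ⟨i, hi, rfl⟩

lemma mem_ladder_indicator {a : ℕ} (ha : a < P) :
    {(R a, false), (S a, true)} ∈ ladder n P f R S := by
  simp only [ladder, mem_union, mem_image, mem_range]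
  exact Or.inl <| Or.inl <| Or.inl <| Or.inr ⟨a, ha, rfl⟩

lemma mem_ladder_step {a : ℕ} (ha : a + 1 < P) :
    {(S a, false), (S (a + 1), true)} ∈ ladder n P f R S := by
  simp only [ladder, mem_union, mem_image, mem_range]
  exact Or.inl <| Or.inl <| Or.inr ⟨a, by omega, rfl⟩

lemma mem_ladder_exclusion {a : ℕ} (ha : a + 1 < P) :
    {(S a, false), (R (a + 1), false)} ∈ ladder n P f R S := by
  simp only [ladder, mem_union, mem_image, mem_range]
  exact Or.inl <| Or.inr ⟨a, by omega, rfl⟩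

lemma mem_ladder_output : {(S (P - 1), false), (n, true)} ∈ ladder n P f R S :=
  mem_union_right _ (mem_singleton_self _)

variable {ψ : CNF}

lemma unitProp_S_of_le (hG : ladder n P f R S ⊆ ψ) {a b : ℕ} (hab : a ≤ b) (hb : b < P)
    (h : UnitProp ψ (S a, true)) : UnitProp ψ (S b, true) := by
  induction b, hab using Nat.le_induction with
  | base => exact h
  | succ b _ ih => exact UnitProp.of_pair (hG (mem_ladder_step hb)) (ih (by omega))

lemma unitProp_not_S_of_le (hG : ladder n P f R S ⊆ ψ) {a b : ℕ} (hab : a ≤ b) (hb : b < P)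
    (h : UnitProp ψ (S b, false)) : UnitProp ψ (S a, false) := by
  induction hab using Nat.decreasingInduction with
  | self => exact h
  | of_succ a hab ih => exact UnitProp.of_pair_left (hG (mem_ladder_step (by omega))) ih

lemma unitProp_S_of_input (hG : ladder n P f R S ⊆ ψ) {i b : ℕ} (hi : i < n) (hib : f i ≤ b)
    (hb : b < P) (h : UnitProp ψ (i, true)) : UnitProp ψ (S b, true) :=
  unitProp_S_of_le hG hib hb <| UnitProp.of_pair (hG (mem_ladder_indicator (by omega))) <|
    UnitProp.of_pair (hG (mem_ladder_input hi)) h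

lemma unitProp_not_input_of_not_S (hG : ladder n P f R S ⊆ ψ) {j b : ℕ} (hj : j < n)
    (hjb : f j ≤ b) (hb : b < P) (h : UnitProp ψ (S b, false)) : UnitProp ψ (j, false) :=
  UnitProp.of_pair_left (hG (mem_ladder_input hj)) <|
    UnitProp.of_pair_left (hG (mem_ladder_indicator (by omega))) <|
    unitProp_not_S_of_le hG hjb hb h

lemma unitProp_output_of_input (hG : ladder n P f R S ⊆ ψ) {i : ℕ} (hi : i < n) (hfi : f i < P)
    (h : UnitProp ψ (i, true)) : UnitProp ψ (n, true) :=
  UnitProp.of_pair (hG mem_ladder_output) <| unitProp_S_of_input hG hi (by omega) (by omega) h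

lemma unitProp_not_input_of_not_output (hG : ladder n P f R S ⊆ ψ) {j : ℕ} (hj : j < n)
    (hfj : f j < P) (h : UnitProp ψ (n, false)) : UnitProp ψ (j, false) :=
  unitProp_not_input_of_not_S hG hj (by omega) (by omega) <|
    UnitProp.of_pair_left (hG mem_ladder_output) h

lemma unitProp_not_input_of_ne (hG : ladder n P f R S ⊆ ψ) {i j : ℕ} (hi : i < n) (hj : j < n)
    (hfi : f i < P) (hfj : f j < P) (hij : f i ≠ f j) (h : UnitProp ψ (i, true)) :
    UnitProp ψ (j, false) := by
  rcases hij.lt_or_gt with hlt | hlt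
  · obtain ⟨b, hb⟩ : ∃ b, f j = b + 1 := ⟨f j - 1, by omega⟩
    have hS : UnitProp ψ (S b, true) := unitProp_S_of_input hG hi (by omega) (by omega) h
    have hR : UnitProp ψ (R (f j), false) :=
      hb ▸ UnitProp.of_pair (hG (mem_ladder_exclusion (by omega))) hS
    exact UnitProp.of_pair_left (hG (mem_ladder_input hj)) hR
  · obtain ⟨b, hb⟩ : ∃ b, f i = b + 1 := ⟨f i - 1, by omega⟩
    have hR : UnitProp ψ (R (f i), true) := UnitProp.of_pair (hG (mem_ladder_input hi)) h
    have hS : UnitProp ψ (S b, false) :=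
      UnitProp.of_pair_left (hG (mem_ladder_exclusion (by omega))) (hb ▸ hR)
    exact unitProp_not_input_of_not_S hG hj (by omega) (by omega) hS

lemma sat_ladder {σ : Var → Bool} (hσ : AMOz.IsModel n σ) (hP : 0 < P) (hf : ∀ i < n, f i < P)
    (hR : ∀ a < P, σ (R a) = decide (∃ i < n, σ i = true ∧ f i = a))
    (hS : ∀ a < P, σ (S a) = decide (∃ i < n, σ i = true ∧ f i ≤ a)) :
    CNF.sat σ (ladder n P f R S) := by
  intro C hC
  simp only [ladder, mem_union, mem_image, mem_range, mem_singleton] at hC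
  rcases hC with ((((⟨i, hi, rfl⟩ | ⟨a, ha, rfl⟩) | ⟨a, ha, rfl⟩) | ⟨a, ha, rfl⟩) | rfl) <;>
    simp only [Clause.sat_pair, Lit.eval_mk_true, Lit.eval_mk_false, Bool.not_eq_true']
  · rw [hR _ (hf i hi)]
    by_cases h : σ i = true
    · exact Or.inr (decide_eq_true ⟨i, hi, h, rfl⟩)
    · simp [h]
  · rw [hR a ha, hS a ha]
    by_cases h : ∃ i < n, σ i = true ∧ f i = a
    · obtain ⟨i, hi, hσi, rfl⟩ := h
      exact Or.inr (decide_eq_true ⟨i, hi, hσi, le_rfl⟩)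
    · simp [h]
  · rw [hS a (by omega), hS (a + 1) (by omega)]
    by_cases h : ∃ i < n, σ i = true ∧ f i ≤ a
    · obtain ⟨i, hi, hσi, hia⟩ := h
      exact Or.inr (decide_eq_true ⟨i, hi, hσi, by omega⟩)
    · simp [h]
  · rw [hS a (by omega), hR (a + 1) (by omega)]
    by_contra! h
    simp only [ne_eq, Bool.not_eq_false, decide_eq_true_eq] at h
    obtain ⟨⟨i, hi, hσi, hia⟩, ⟨j, hj, hσj, hja⟩⟩ := h
    obtain rfl := hσ.amo i hi j hj hσi hσj
    omega
  · rw [hS _ (by omega)]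
    by_cases h : ∃ i < n, σ i = true ∧ f i ≤ P - 1
    · obtain ⟨i, hi, hσi, _⟩ := h
      exact Or.inr (hσ.imp i hi hσi)
    · simp [h]

end Ladder

namespace AMOz

variable {n : ℕ}

inductive Clash (n : ℕ) : Lit → Lit → Prop
  | complement (v : Var) (b : Bool) : Clash n (v, b) (v, !b)
  | inputs {i j : ℕ} : i < n → j < n → i ≠ j → Clash n (i, true) (j, true)
  | input_output {i : ℕ} : i < n → Clash n (i, true) (n, false)
  | output_input {i : ℕ} : i < n → Clash n (n, false) (i, true)

lemma Clash.symm {a b : Lit} : Clash n a b → Clash n b a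
  | .complement v b => by simpa using Clash.complement (n := n) v (!b)
  | .inputs hi hj hij => .inputs hj hi hij.symm
  | .input_output hi => .output_input hi
  | .output_input hi => .input_output hi

lemma Clash.ne {a b : Lit} (h : Clash n a b) : a ≠ b := by
  cases h <;> simp_all [Nat.ne_of_lt]

lemma exists_isModel_of_forall_not_clash {M : List Lit} (hM : ∀ a ∈ M, ∀ b ∈ M, ¬ Clash n a b) :
    ∃ τ : Var → Bool, IsModel n τ ∧ ∀ m ∈ M, Lit.eval τ m = true := by
  refine ⟨fun v => if v = n then !decide ((n, false) ∈ M) else decide ((v, true) ∈ M),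
    ⟨fun i hi j hj hτi hτj => ?_, fun i hi hτi => ?_⟩, fun ⟨v, b⟩ hm => ?_⟩
  · simp only [hi.ne, hj.ne, if_false, decide_eq_true_eq] at hτi hτj
    by_contra hij
    exact hM _ hτi _ hτj (.inputs hi hj hij)
  · simp only [hi.ne, if_false, if_true, decide_eq_true_eq, Bool.not_eq_true',
      decide_eq_false_iff_not] at hτi ⊢
    exact fun hz => hM _ hτi _ hz (.input_output hi)
  · have hc : (v, !b) ∉ M := fun h => hM _ hm _ h (.complement v b)
    by_cases hv : v = n <;> cases b <;> simp_all

def side (n : ℕ) : ℕ := n.sqrt + 1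

lemma side_pos (n : ℕ) : 0 < side n := n.sqrt.succ_pos

lemma div_side_lt {i : ℕ} (hi : i < n) : i / side n < side n :=
  Nat.div_lt_of_lt_mul <| hi.trans_le <| by
    simpa [side, pow_two] using (Nat.lt_succ_sqrt' n).le

lemma div_side_ne_or_mod_side_ne {i j : ℕ} (hij : i ≠ j) :
    i / side n ≠ j / side n ∨ i % side n ≠ j % side n := by
  by_contra! h
  exact hij (by rw [← Nat.div_add_mod i (side n), ← Nat.div_add_mod j (side n), h.1, h.2])

/-- The inputs form a grid of `side n` columns: `x_i` lies in row `i / side n` and column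
`i % side n`, and the rows and the columns each get a ladder. The auxiliary variables are
`n + 1, …, n + 4 * side n`. -/
def rowLadder (n : ℕ) : CNF :=
  ladder n (side n) (· / side n) (n + 1 + ·) (n + 1 + side n + ·)

def colLadder (n : ℕ) : CNF :=
  ladder n (side n) (· % side n) (n + 1 + 2 * side n + ·) (n + 1 + 3 * side n + ·)

def encoding (n : ℕ) : CNF := rowLadder n ∪ colLadder n

lemma unitProp_negate_of_clash {ψ : CNF} (hψ : encoding n ⊆ ψ) {a b : Lit}
    (ha : UnitProp ψ a) (hab : Clash n a b) : UnitProp ψ b.negate := by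
  have hrow : rowLadder n ⊆ ψ := subset_union_left.trans hψ
  have hcol : colLadder n ⊆ ψ := subset_union_right.trans hψ
  have hmod : ∀ i, i % side n < side n := fun i => Nat.mod_lt i (side_pos n)
  cases hab with
  | complement v b => simpa [Lit.negate] using ha
  | inputs hi hj hij =>
    rcases div_side_ne_or_mod_side_ne hij with h | h
    · exact unitProp_not_input_of_ne hrow hi hj (div_side_lt hi) (div_side_lt hj) h ha
    · exact unitProp_not_input_of_ne hcol hi hj (hmod _) (hmod _) h ha
  | input_output hi => exact unitProp_output_of_input hrow hi (div_side_lt hi) ha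
  | output_input hi => exact unitProp_not_input_of_not_output hrow hi (div_side_lt hi) ha

lemma isModel_of_sat {σ : Var → Bool} (hσ : CNF.sat σ (encoding n)) : IsModel n σ := by
  have clash_sound : ∀ a b, Clash n a b → Lit.eval σ a = true → Lit.eval σ b = false := by
    intro a b hab ha
    have hsat : CNF.sat σ (withUnits (encoding n) [a]) := CNF.sat_withUnits hσ (by simpa)
    simpa using (unitProp_negate_of_clash subset_union_left
      (UnitProp.of_mem_units (List.mem_singleton_self a)) hab).sound hsat
  refine ⟨fun i hi j hj hσi hσj => ?_, fun i hi hσi => ?_⟩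
  · by_contra hij
    simpa [hσj] using clash_sound _ _ (.inputs hi hj hij) hσi
  · simpa using clash_sound _ _ (.input_output hi) hσi

lemma IsModel.of_eqOn {σ τ : Var → Bool} (hτ : IsModel n τ) (h : ∀ v ≤ n, σ v = τ v) :
    IsModel n σ where
  amo i hi j hj hσi hσj := hτ.amo i hi j hj (h i hi.le ▸ hσi) (h j hj.le ▸ hσj)
  imp i hi hσi := h n le_rfl ▸ hτ.imp i hi (h i hi.le ▸ hσi)

def ladderValue (n P : ℕ) (f : ℕ → ℕ) (τ : Var → Bool) (w : ℕ) : Bool :=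
  if w < P then decide (∃ i < n, τ i = true ∧ f i = w)
  else decide (∃ i < n, τ i = true ∧ f i ≤ w - P)

def extend (n : ℕ) (τ : Var → Bool) (v : ℕ) : Bool :=
  if v ≤ n then τ v
  else if v < n + 1 + 2 * side n then ladderValue n (side n) (· / side n) τ (v - (n + 1))
  else ladderValue n (side n) (· % side n) τ (v - (n + 1 + 2 * side n))

lemma extend_of_le (τ : Var → Bool) {v : ℕ} (hv : v ≤ n) : extend n τ v = τ v := if_pos hv

lemma sat_extend {τ : Var → Bool} (hτ : IsModel n τ) : CNF.sat (extend n τ) (encoding n) := by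
  have hσ : IsModel n (extend n τ) := hτ.of_eqOn fun v hv => extend_of_le τ hv
  have hex : ∀ p : ℕ → Prop, (∃ i < n, extend n τ i = true ∧ p i) ↔ ∃ i < n, τ i = true ∧ p i :=
    fun p => exists_congr fun i => and_congr_right fun hi => by rw [extend_of_le τ hi.le]
  have hs := side_pos n
  refine CNF.sat_union.2 ⟨sat_ladder hσ hs (fun i hi => div_side_lt hi) ?_ ?_,
    sat_ladder hσ hs (fun i _ => Nat.mod_lt i hs) ?_ ?_⟩ <;>
    intro a ha <;> simp only [hex] <;> simp only [extend, ladderValue] <;> split_ifs <;>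
    -- `omega` discards the branches of `extend` whose range does not contain the variable
    first
    | omega
    | exact decide_eq_decide.2 <| exists_congr fun i =>
        and_congr_right fun _ => and_congr_right fun _ => by omega

lemma eq_true_iff_isModel {τ : Fin (n + 1) → Bool} {σ : Var → Bool}
    (hστ : ∀ i : Fin (n + 1), σ i = τ i) : AMOz n τ = true ↔ IsModel n σ := by
  have hcast : ∀ i : Fin n, τ i.castSucc = σ i := fun i => (hστ i.castSucc).symm
  have hlast : τ (Fin.last n) = σ n := (hστ (Fin.last n)).symm
  simp only [AMOz, AMO, AtMost, Bool.and_eq_true, decide_eq_true_eq, Finset.card_le_one,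
    mem_filter, mem_univ, true_and, hcast, hlast, Fin.forall_iff, Fin.ext_iff]
  exact ⟨fun ⟨h₁, h₂⟩ => ⟨fun i hi j hj hσi hσj => h₁ i hi hσi j hj hσj, h₂⟩,
    fun h => ⟨fun i hi hσi j hj hσj => h.amo i hi j hj hσi hσj, h.imp⟩⟩

theorem encodes_encoding (n : ℕ) : Encodes (n + 1) (AMOz n) (encoding n) := by
  intro τ
  constructor
  · intro h
    let σ : Var → Bool := fun v => if hv : v < n + 1 then τ ⟨v, hv⟩ else false
    have hστ : ∀ i : Fin (n + 1), σ i = τ i := fun i => dif_pos i.isLt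
    refine ⟨extend n σ, fun i => (extend_of_le σ (Nat.le_of_lt_succ i.isLt)).trans (hστ i), ?_⟩
    exact sat_extend ((eq_true_iff_isModel hστ).1 h)
  · rintro ⟨σ, hστ, hσ⟩
    exact (eq_true_iff_isModel hστ).2 (isModel_of_sat hσ)

theorem propagationComplete_encoding (n : ℕ) : PropagationComplete (n + 1) (encoding n) := by
  intro L l hL hl hent
  have hψ : encoding n ⊆ withUnits (encoding n) L := subset_union_left
  by_cases hclash : ∃ a ∈ L, ∃ b ∈ l.negate :: L, Clash n a b
  · obtain ⟨a, ha, b, hb, hab⟩ := hclash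
    have hnb := unitProp_negate_of_clash hψ (UnitProp.of_mem_units ha) hab
    rcases List.mem_cons.1 hb with rfl | hb
    · exact Or.inl (by simpa using hnb)
    · exact Or.inr ((UnitProp.of_mem_units hb).unitRefutes hnb)
  · exfalso
    push Not at hclash
    obtain ⟨τ, hτ, hτM⟩ := exists_isModel_of_forall_not_clash (n := n) (M := l.negate :: L) <| by
      intro a ha b hb
      rcases List.mem_cons.1 ha with rfl | ha
      · rcases List.mem_cons.1 hb with rfl | hb
        · exact fun h => h.ne rfl
        · exact fun h => hclash b hb _ (.head _) h.symm
      · exact hclash a ha b hb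
    have hagree : ∀ m : Lit, m.1 < n + 1 → Lit.eval (extend n τ) m = Lit.eval τ m :=
      fun m hm => by rw [Lit.eval, Lit.eval, extend_of_le τ (Nat.le_of_lt_succ hm)]
    have hsat : CNF.sat (extend n τ) (withUnits (encoding n) L) :=
      CNF.sat_withUnits (sat_extend hτ) fun m hm =>
        (hagree m (hL m hm)).trans (hτM m (.tail _ hm))
    have hτl : Lit.eval τ l = true := hagree l hl ▸ hent _ hsat
    simpa [hτl] using hτM _ (.head _)

lemma card_encoding_le (n : ℕ) : (encoding n).card ≤ 2 * n + 6 * side n :=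
  calc (encoding n).card ≤ (rowLadder n).card + (colLadder n).card := card_union_le _ _
    _ ≤ (n + 3 * side n) + (n + 3 * side n) :=
      add_le_add (card_ladder_le (side_pos n)) (card_ladder_le (side_pos n))
    _ = 2 * n + 6 * side n := by ring

lemma card_auxVars_encoding_le (n : ℕ) : (CNF.auxVars (n + 1) (encoding n)).card ≤ 4 * side n := by
  have hs := side_pos n
  have hvars : CNF.vars (encoding n) ⊆ range (n + 1 + 4 * side n) := by
    rw [encoding, CNF.vars, sup_union]
    exact union_subset
      (vars_ladder_subset hs (by omega) (fun i hi => div_side_lt hi) (by omega) (by omega))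
      (vars_ladder_subset hs (by omega) (fun i _ => Nat.mod_lt i hs) (by omega) (by omega))
  calc (CNF.auxVars (n + 1) (encoding n)).card
      ≤ (range (n + 1 + 4 * side n) \ range (n + 1)).card :=
        card_le_card (sdiff_subset_sdiff hvars le_rfl)
    _ = 4 * side n := by
      rw [card_sdiff_of_subset (range_subset_range.2 (by omega)), card_range, card_range]
      omega

lemma side_le_two_mul_sqrt (hn : 1 ≤ n) : (side n : ℝ) ≤ 2 * √n := by
  have hsqrt : (n.sqrt : ℝ) ≤ √n := Real.nat_sqrt_le_real_sqrt
  have hone : 1 ≤ √(n : ℝ) := Real.one_le_sqrt.2 (by exact_mod_cast hn)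
  push_cast [side]
  linarith

end AMOz

/-- There exists `C > 0` such that for every `n ≥ 1` there is a
propagation-complete CNF encoding of `AMO'(x_1, …, x_n; z)` using at most
`2n + C·√n` clauses and at most `C·√n` auxiliary variables. -/
theorem amo_indicator_encoding :
    ∃ C : ℝ, 0 < C ∧ ∀ n : ℕ, 1 ≤ n →
      ∃ φ : CNF, Encodes (n + 1) (AMOz n) φ ∧ PropagationComplete (n + 1) φ ∧
        (φ.card : ℝ) ≤ 2 * n + C * Real.sqrt n ∧
        ((CNF.auxVars (n + 1) φ).card : ℝ) ≤ C * Real.sqrt n := by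
  refine ⟨12, by norm_num, fun n hn => ⟨AMOz.encoding n, AMOz.encodes_encoding n,
    AMOz.propagationComplete_encoding n, ?_, ?_⟩⟩
  all_goals have hside := AMOz.side_le_two_mul_sqrt hn
  · have hcard : ((AMOz.encoding n).card : ℝ) ≤ 2 * n + 6 * AMOz.side n := by
      exact_mod_cast AMOz.card_encoding_le n
    linarith
  · have haux : ((CNF.auxVars (n + 1) (AMOz.encoding n)).card : ℝ) ≤ 4 * AMOz.side n := by
      exact_mod_cast AMOz.card_auxVars_encoding_le n
    linarith [Real.sqrt_nonneg n]
end

section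
/- For all integers n ≥ k ≥ 1, setting m = ⌊(k·n²)^(1/3)⌋ and ℓ = 4·⌈(k²·n)^(1/3)⌉, there exist 3-element subsets H_1, ..., H_m of {1,...,ℓ} such that every subfamily of at most k of them admits a transversal; that is, for every S ⊆ {1,...,m} with |S| ≤ k there exists an injective function f : S → {1,...,ℓ} with f(i) ∈ H_i for every i ∈ S. -/
/-!
Choose the `m` triples independently and uniformly among the `C(ℓ, 3)` triples of `{1, …, ℓ}`.
A subfamily of `j ≤ k` triples violates Hall's condition only if its union lies in some
`(j - 1)`-set, so a union bound over the choices of the `j` triples and of that set bounds the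
proportion of bad families by `∑ⱼ C(m, j) C(ℓ, j - 1) (C(j - 1, 3) / C(ℓ, 3)) ^ j`.
Writing `ℓ = 4c`, the choice of `m` and `c` gives `k ≤ c` and `(mk)³ ≤ (k²n)² ≤ c⁶`, i.e.
`4k ≤ ℓ` and `16mk ≤ ℓ²`; then `j ^ j ≤ 3 ^ j j!` bounds the `j`-th term by `(9/16) ^ j / 4`,
so the sum is `< 1`. Hence some family satisfies Hall's condition
for all subfamilies of size at most `k`, and Hall's marriage theorem provides the transversals.
-/

open Finset Fintype
open scoped Nat

namespace Nat

theorem descFactorial_mul_pow_le_pow_mul_descFactorial {a b : ℕ} (hab : a ≤ b) (r : ℕ) :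
    a.descFactorial r * b ^ r ≤ a ^ r * b.descFactorial r := by
  induction r with
  | zero => simp
  | succ r ih =>
    have step : (a - r) * b ≤ a * (b - r) := by
      rw [Nat.sub_mul, Nat.mul_sub]
      exact Nat.sub_le_sub_left (by rw [Nat.mul_comm r b]; exact Nat.mul_le_mul_right r hab) _
    rw [descFactorial_succ, descFactorial_succ, pow_succ, pow_succ]
    calc (a - r) * a.descFactorial r * (b ^ r * b)
        = (a.descFactorial r * b ^ r) * ((a - r) * b) := by ring
      _ ≤ (a ^ r * b.descFactorial r) * (a * (b - r)) := Nat.mul_le_mul ih step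
      _ = a ^ r * a * ((b - r) * b.descFactorial r) := by ring

theorem choose_mul_pow_le_pow_mul_choose {a b : ℕ} (hab : a ≤ b) (r : ℕ) :
    a.choose r * b ^ r ≤ a ^ r * b.choose r := by
  have h := descFactorial_mul_pow_le_pow_mul_descFactorial hab r
  rw [descFactorial_eq_factorial_mul_choose, descFactorial_eq_factorial_mul_choose] at h
  refine Nat.le_of_mul_le_mul_left ?_ r.factorial_pos
  calc r ! * (a.choose r * b ^ r) = r ! * a.choose r * b ^ r := by ring
    _ ≤ a ^ r * (r ! * b.choose r) := h
    _ = r ! * (a ^ r * b.choose r) := by ring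

theorem floor_rpow_one_div_pow_le (x : ℕ) {n : ℕ} (hn : n ≠ 0) :
    ⌊(x : ℝ) ^ ((1 : ℝ) / n)⌋₊ ^ n ≤ x := by
  have hx : (0 : ℝ) ≤ x := x.cast_nonneg
  have h := pow_le_pow_left₀ (Nat.cast_nonneg _) (Nat.floor_le (Real.rpow_nonneg hx ((1 : ℝ) / n))) n
  rw [one_div, Real.rpow_inv_natCast_pow hx hn] at h
  rw [one_div]
  exact_mod_cast h

theorem le_ceil_rpow_one_div_pow (x : ℕ) {n : ℕ} (hn : n ≠ 0) :
    x ≤ ⌈(x : ℝ) ^ ((1 : ℝ) / n)⌉₊ ^ n := by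
  have hx : (0 : ℝ) ≤ x := x.cast_nonneg
  have h := pow_le_pow_left₀ (Real.rpow_nonneg hx ((1 : ℝ) / n)) (Nat.le_ceil _) n
  rw [one_div, Real.rpow_inv_natCast_pow hx hn] at h
  rw [one_div]
  exact_mod_cast h

theorem cast_choose_le_div_pow_mul_choose {a b : ℕ} (hab : a ≤ b) (r : ℕ) :
    (a.choose r : ℝ) ≤ ((a : ℝ) / b) ^ r * b.choose r := by
  rcases (Nat.zero_le b).eq_or_lt with rfl | hb
  · obtain rfl := Nat.le_zero.mp hab
    cases r <;> simp
  rw [div_pow, div_mul_eq_mul_div, le_div_iff₀ (by positivity)]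
  exact_mod_cast choose_mul_pow_le_pow_mul_choose hab r

end Nat

theorem pow_div_factorial_le_three_pow (j : ℕ) : (j : ℝ) ^ j / j ! ≤ 3 ^ j := by
  calc (j : ℝ) ^ j / j ! ≤ Real.exp j := Real.pow_div_factorial_le_exp _ j.cast_nonneg j
    _ = Real.exp 1 ^ j := by rw [← Real.exp_nat_mul, mul_one]
    _ ≤ 3 ^ j := pow_le_pow_left₀ (Real.exp_pos 1).le
        (by linarith [Real.exp_one_lt_d9]) j

theorem choose_mul_choose_mul_choose_pow_le {m ℓ j : ℕ} (hj : j ≠ 0) (hjℓ : 4 * j ≤ ℓ)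
    (hmj : 16 * (m * j) ≤ ℓ ^ 2) :
    (m.choose j : ℝ) * ℓ.choose (j - 1) * (j - 1).choose 3 ^ j
      ≤ (9 / 16) ^ j / 4 * ℓ.choose 3 ^ j := by
  have hℓ : (0 : ℝ) < ℓ := by exact_mod_cast (by omega : 0 < ℓ)
  have hq : (m : ℝ) * j / ℓ ^ 2 ≤ 1 / 16 := by
    rw [div_le_div_iff₀ (by positivity) (by norm_num)]
    exact_mod_cast (by linarith : m * j * 16 ≤ 1 * ℓ ^ 2)
  have hr : (j : ℝ) / ℓ ≤ 1 / 4 := by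
    rw [div_le_div_iff₀ hℓ (by norm_num)]
    exact_mod_cast (by linarith : j * 4 ≤ 1 * ℓ)
  have hC : ((j - 1).choose 3 : ℝ) ≤ ((j : ℝ) / ℓ) ^ 3 * ℓ.choose 3 :=
    (Nat.cast_le.2 (Nat.choose_le_choose 3 (j.sub_le 1))).trans
      (Nat.cast_choose_le_div_pow_mul_choose (by omega) 3)
  obtain ⟨i, rfl⟩ := Nat.exists_eq_succ_of_ne_zero hj
  have hF : ((i + 1 : ℕ) : ℝ) ^ i / i ! = ((i + 1 : ℕ) : ℝ) ^ (i + 1) / (i + 1) ! := by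
    rw [Nat.factorial_succ]; push_cast; field_simp; ring
  simp only [Nat.succ_sub_one] at hC ⊢
  calc (m.choose (i + 1) : ℝ) * ℓ.choose i * i.choose 3 ^ (i + 1)
      ≤ m ^ (i + 1) / (i + 1) ! * (ℓ ^ i / i !) * (((i + 1 : ℕ) / ℓ) ^ 3 * ℓ.choose 3) ^ (i + 1) := by
        gcongr
        · exact Nat.choose_le_pow_div _ _
        · exact Nat.choose_le_pow_div _ _
    _ = (m * (i + 1 : ℕ) / ℓ ^ 2) ^ (i + 1) * ((i + 1 : ℕ) / ℓ)
          * ((i + 1 : ℕ) ^ (i + 1) / (i + 1) !) * ((i + 1 : ℕ) ^ i / i !) * ℓ.choose 3 ^ (i + 1) := by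
        have : (ℓ : ℝ) ≠ 0 := hℓ.ne'
        simp only [div_pow, mul_pow, ← pow_mul]; field_simp; ring
    _ ≤ (1 / 16) ^ (i + 1) * (1 / 4) * 3 ^ (i + 1) * 3 ^ (i + 1) * ℓ.choose 3 ^ (i + 1) := by
        rw [hF]; gcongr <;> exact pow_div_factorial_le_three_pow _
    _ = (9 / 16) ^ (i + 1) / 4 * ℓ.choose 3 ^ (i + 1) := by
        rw [show (9 : ℝ) / 16 = 1 / 16 * 3 * 3 by norm_num, mul_pow, mul_pow]; ring

theorem sum_choose_mul_choose_mul_choose_pow_lt {M ℓ k : ℕ} (hℓ : 3 ≤ ℓ) (hkℓ : 4 * k ≤ ℓ)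
    (hMk : 16 * (M * k) ≤ ℓ ^ 2) :
    ∑ j ∈ Icc 1 k, M.choose j * ℓ.choose (j - 1) * ((j - 1).choose 3 ^ j * ℓ.choose 3 ^ (M - j))
      < ℓ.choose 3 ^ M := by
  have hN : (0 : ℝ) < ℓ.choose 3 := by exact_mod_cast Nat.choose_pos hℓ
  have hterm : ∀ j ∈ Icc 1 k, (M.choose j : ℝ) * ℓ.choose (j - 1)
      * ((j - 1).choose 3 ^ j * ℓ.choose 3 ^ (M - j)) ≤ (9 / 16) ^ j / 4 * ℓ.choose 3 ^ M := by
    intro j hj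
    rw [mem_Icc] at hj
    rcases le_or_gt j M with hjM | hMj
    · have hMj : 16 * (M * j) ≤ ℓ ^ 2 :=
        (Nat.mul_le_mul_left 16 (Nat.mul_le_mul_left M hj.2)).trans hMk
      calc (M.choose j : ℝ) * ℓ.choose (j - 1) * ((j - 1).choose 3 ^ j * ℓ.choose 3 ^ (M - j))
          = M.choose j * ℓ.choose (j - 1) * (j - 1).choose 3 ^ j * ℓ.choose 3 ^ (M - j) := by
            ring
        _ ≤ (9 / 16) ^ j / 4 * ℓ.choose 3 ^ j * ℓ.choose 3 ^ (M - j) :=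
            mul_le_mul_of_nonneg_right
              (choose_mul_choose_mul_choose_pow_le (by omega) (by omega) hMj) (by positivity)
        _ = (9 / 16) ^ j / 4 * ℓ.choose 3 ^ M := by
            rw [mul_assoc, ← pow_add, Nat.add_sub_cancel' hjM]
    · rw [Nat.choose_eq_zero_of_lt hMj, Nat.cast_zero, zero_mul, zero_mul]
      positivity
  have hgeom : ∑ j ∈ Icc 1 k, ((9 : ℝ) / 16) ^ j ≤ 9 / 7 := by
    rw [← Ico_add_one_right_eq_Icc]
    calc _ ≤ ((9 : ℝ) / 16) ^ 1 / (1 - 9 / 16) := geom_sum_Ico_le_of_lt_one (by norm_num) (by norm_num)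
      _ = 9 / 7 := by norm_num
  suffices h : ∑ j ∈ Icc 1 k, (M.choose j : ℝ) * ℓ.choose (j - 1)
      * ((j - 1).choose 3 ^ j * ℓ.choose 3 ^ (M - j)) < ℓ.choose 3 ^ M by exact_mod_cast h
  calc _ ≤ ∑ j ∈ Icc 1 k, (9 / 16) ^ j / 4 * (ℓ.choose 3 : ℝ) ^ M := sum_le_sum hterm
    _ = (∑ j ∈ Icc 1 k, ((9 : ℝ) / 16) ^ j) / 4 * ℓ.choose 3 ^ M := by rw [sum_div, sum_mul]
    _ ≤ 9 / 7 / 4 * ℓ.choose 3 ^ M := by gcongr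
    _ < ℓ.choose 3 ^ M := by linarith [pow_pos hN M]

section RandomFamily

variable {ι α : Type*} [Fintype ι] [DecidableEq ι] [Fintype α] [DecidableEq α]

theorem card_filter_forall_subset_piFinset_powersetCard (r : ℕ) (I : Finset ι)
    (U : Finset α) :
    #{H ∈ piFinset fun _ : ι ↦ powersetCard r (univ : Finset α) | ∀ i ∈ I, H i ⊆ U}
      = (#U).choose r ^ #I * (card α).choose r ^ (card ι - #I) := by
  have hforced : {H ∈ piFinset fun _ : ι ↦ powersetCard r (univ : Finset α) | ∀ i ∈ I, H i ⊆ U}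
      = piFinset fun i ↦ if i ∈ I then powersetCard r U else powersetCard r univ := by
    ext H
    simp only [mem_filter, mem_piFinset]
    refine ⟨fun ⟨hcard, hsub⟩ i ↦ ?_, fun h ↦ ⟨fun i ↦ ?_, fun i hi ↦ ?_⟩⟩
    · split_ifs with hi
      · exact mem_powersetCard.2 ⟨hsub i hi, (mem_powersetCard.1 (hcard i)).2⟩
      · exact hcard i
    · have hi := h i
      split_ifs at hi
      exacts [powersetCard_mono (subset_univ U) hi, hi]
    · simpa [hi] using (mem_powersetCard.1 (by simpa [hi] using h i)).1
  rw [hforced, card_piFinset]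
  simp only [apply_ite Finset.card, card_powersetCard, Finset.card_univ, prod_ite, prod_const,
    filter_mem_eq_inter, univ_inter, filter_not, card_sdiff, inter_univ]

theorem card_filter_not_hall_le (r k : ℕ) (hk : k ≤ card α) :
    #{H ∈ piFinset fun _ : ι ↦ powersetCard r (univ : Finset α) |
        ∃ I : Finset ι, #I ≤ k ∧ #(I.biUnion H) < #I}
      ≤ ∑ j ∈ Icc 1 k, (card ι).choose j * (card α).choose (j - 1)
          * ((j - 1).choose r ^ j * (card α).choose r ^ (card ι - j)) := by
  set F := piFinset fun _ : ι ↦ powersetCard r (univ : Finset α)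
  calc _ ≤ #((Icc 1 k).biUnion fun j ↦ (powersetCard j univ).biUnion fun I ↦
          (powersetCard (j - 1) univ).biUnion fun U ↦ {H ∈ F | ∀ i ∈ I, H i ⊆ U}) := by
        refine card_le_card fun H hH ↦ ?_
        obtain ⟨hHF, I, hIk, hlt⟩ := mem_filter.mp hH
        obtain ⟨U, hHU, -, hU⟩ := exists_subsuperset_card_eq (subset_univ (I.biUnion H))
          (n := #I - 1) (by omega) (by simp; omega)
        simp only [mem_biUnion, mem_Icc, mem_powersetCard, subset_univ, true_and, mem_filter]
        exact ⟨#I, ⟨by omega, hIk⟩, I, rfl, U, hU, hHF,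
          fun i hi ↦ (subset_biUnion_of_mem H hi).trans hHU⟩
    _ ≤ ∑ j ∈ Icc 1 k, ∑ I ∈ powersetCard j univ, ∑ U ∈ powersetCard (j - 1) univ,
          #{H ∈ F | ∀ i ∈ I, H i ⊆ U} :=
        card_biUnion_le.trans <| sum_le_sum fun _ _ ↦
          card_biUnion_le.trans <| sum_le_sum fun _ _ ↦ card_biUnion_le
    _ = _ := by
        refine sum_congr rfl fun j _ ↦ ?_
        have hforced : ∀ I ∈ powersetCard j univ, ∀ U ∈ powersetCard (j - 1) univ,
            #{H ∈ F | ∀ i ∈ I, H i ⊆ U} = (j - 1).choose r ^ j * (card α).choose r ^ (card ι - j) := by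
          intro I hI U hU
          rw [mem_powersetCard] at hI hU
          rw [← hU.2, ← hI.2]
          exact card_filter_forall_subset_piFinset_powersetCard r I U
        rw [sum_const_nat fun I hI ↦ sum_const_nat (hforced I hI), card_powersetCard,
          card_powersetCard, Finset.card_univ, Finset.card_univ, mul_assoc]

theorem exists_card_three_forall_card_le_card_biUnion (k : ℕ) (hα : 3 ≤ card α)
    (hkα : 4 * k ≤ card α) (hια : 16 * (card ι * k) ≤ card α ^ 2) :
    ∃ H : ι → Finset α, (∀ i, #(H i) = 3) ∧ ∀ I : Finset ι, #I ≤ k → #I ≤ #(I.biUnion H) := by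
  set F := piFinset fun _ : ι ↦ powersetCard 3 (univ : Finset α) with hF
  have hbad : #{H ∈ F | ∃ I : Finset ι, #I ≤ k ∧ #(I.biUnion H) < #I} < #F := by
    refine (card_filter_not_hall_le 3 k (by omega)).trans_lt ?_
    rw [hF, card_piFinset, prod_const, card_powersetCard, Finset.card_univ, Finset.card_univ]
    exact sum_choose_mul_choose_mul_choose_pow_lt hα hkα hια
  obtain ⟨H, hHF, hH⟩ := exists_mem_notMem_of_card_lt_card hbad
  simp only [mem_filter, hHF, true_and, not_exists, not_and, not_lt] at hH
  exact ⟨H, fun i ↦ (mem_powersetCard.1 (mem_piFinset.1 hHF i)).2, hH⟩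

end RandomFamily

theorem exists_injOn_mem_of_forall_card_le_card_biUnion {ι α : Type*} [DecidableEq α]
    [Nonempty α] {H : ι → Finset α} {S : Finset ι}
    (h : ∀ I ⊆ S, #I ≤ #(I.biUnion H)) :
    ∃ f : ι → α, Set.InjOn f S ∧ ∀ i ∈ S, f i ∈ H i := by
  classical
  obtain ⟨g, hg, hgH⟩ := (all_card_le_biUnion_card_iff_exists_injective fun i : S ↦ H i).1
    fun s ↦ by
      have hs := h (s.image Subtype.val) fun i hi ↦ by
        obtain ⟨x, -, rfl⟩ := mem_image.1 hi
        exact x.2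
      rwa [card_image_of_injective _ Subtype.val_injective, image_biUnion] at hs
  refine ⟨fun i ↦ if hi : i ∈ S then g ⟨i, hi⟩ else Classical.arbitrary α, ?_, ?_⟩
  · intro i hi j hj hij
    simp only [mem_coe] at hi hj
    simp only [dif_pos hi, dif_pos hj] at hij
    exact congrArg Subtype.val (hg hij)
  · intro i hi
    simpa [dif_pos hi] using hgH ⟨i, hi⟩

/-- For all `n ≥ k ≥ 1`, with `m = ⌊(k·n²)^(1/3)⌋` and `ℓ = 4·⌈(k²·n)^(1/3)⌉`,
there exist 3-element subsets `H_1, …, H_m` of `{1, …, ℓ}` (modeled as `Fin ℓ`)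
such that every subfamily of at most `k` of them admits a transversal: for every
`S ⊆ {1, …, m}` with `|S| ≤ k` there is a map `f`, injective on `S`, with
`f i ∈ H i` for all `i ∈ S`. -/
theorem hall_family (n k : ℕ) (hk : 1 ≤ k) (hkn : k ≤ n)
    (m ℓ : ℕ)
    (hm : m = ⌊((k * n ^ 2 : ℕ) : ℝ) ^ ((1 : ℝ) / 3)⌋₊)
    (hℓ : ℓ = 4 * ⌈((k ^ 2 * n : ℕ) : ℝ) ^ ((1 : ℝ) / 3)⌉₊) :
    ∃ H : Fin m → Finset (Fin ℓ),
      (∀ i, (H i).card = 3) ∧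
      ∀ S : Finset (Fin m), S.card ≤ k →
        ∃ f : Fin m → Fin ℓ, Set.InjOn f ↑S ∧ ∀ i ∈ S, f i ∈ H i := by
  set c := ⌈((k ^ 2 * n : ℕ) : ℝ) ^ ((1 : ℝ) / 3)⌉₊
  have hm3 : m ^ 3 ≤ k * n ^ 2 := by
    rw [hm]
    simpa only [Nat.cast_ofNat] using Nat.floor_rpow_one_div_pow_le (k * n ^ 2) three_ne_zero
  have hc3 : k ^ 2 * n ≤ c ^ 3 := by
    simpa only [Nat.cast_ofNat] using Nat.le_ceil_rpow_one_div_pow (k ^ 2 * n) three_ne_zero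
  have hkc : k ≤ c := by
    refine (Nat.pow_le_pow_iff_left (n := 3) (by norm_num)).1 (le_trans ?_ hc3)
    calc k ^ 3 = k ^ 2 * k := by ring
      _ ≤ k ^ 2 * n := Nat.mul_le_mul_left _ hkn
  have hmk : m * k ≤ c ^ 2 := by
    refine (Nat.pow_le_pow_iff_left (n := 3) (by norm_num)).1 ?_
    calc (m * k) ^ 3 = m ^ 3 * k ^ 3 := by ring
      _ ≤ k * n ^ 2 * k ^ 3 := Nat.mul_le_mul_right _ hm3
      _ = (k ^ 2 * n) ^ 2 := by ring
      _ ≤ (c ^ 3) ^ 2 := Nat.pow_le_pow_left hc3 2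
      _ = (c ^ 2) ^ 3 := by ring
  obtain ⟨H, hH3, hHall⟩ := exists_card_three_forall_card_le_card_biUnion (ι := Fin m)
    (α := Fin ℓ) k (by simp; omega) (by simp; omega) (by simp [hℓ]; nlinarith)
  have : Nonempty (Fin ℓ) := ⟨⟨0, by omega⟩⟩
  exact ⟨H, hH3, fun S hS ↦ exists_injOn_mem_of_forall_card_le_card_biUnion
    fun I hI ↦ hHall I ((card_le_card hI).trans hS)⟩
end

section
/- Let q be a prime power, let k ≥ 2 be an integer, and let d = ⌈q/(k−1)⌉. For a polynomial f over the finite field F_q, let S_f = {(a, f(a)) : a ∈ F_q} ⊆ F_q × F_q be the graph of f. Then for any k pairwise distinct polynomials f_1, ..., f_k over F_q, each of degree strictly less than d, the set S_{f_k} is not contained in the union S_{f_1} ∪ S_{f_2} ∪ ⋯ ∪ S_{f_{k−1}}; consequently the family {S_f : f ∈ F_q[x], deg f < d}, which has exactly q^d members, is (k−1)-cover-free. -/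
/-!
Two distinct polynomials of degree `< d` agree in fewer than `d` points, so `k - 1` graphs other
than `S_g` meet `S_g` in at most `(k - 1)(d - 1) < q` points and cannot cover its `q` points.
Since `d ≤ q`, a polynomial of degree `< d` is determined by its graph, so the family is in
bijection with the `q ^ d` coefficient vectors.
-/

/-- The graph `S_f = {(a, f(a)) : a ∈ F}` of a polynomial over a finite field. -/
def polyGraph {F : Type} [Field F] [Fintype F] [DecidableEq F]
    (p : Polynomial F) : Finset (F × F) :=
  Finset.univ.image (fun a => (a, Polynomial.eval a p))

open Polynomial Finset

theorem Polynomial.card_lt_of_eval_eq_of_ne {R : Type*} [CommRing R] [IsDomain R] {p q : R[X]}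
    {d : ℕ} (hp : p.degree < d) (hq : q.degree < d) (hpq : p ≠ q) {s : Finset R}
    (hs : ∀ a ∈ s, p.eval a = q.eval a) : #s < d := by
  by_contra! hds
  exact hpq <| eq_of_degrees_lt_of_eval_finset_eq s (hp.trans_le (by exact_mod_cast hds))
    (hq.trans_le (by exact_mod_cast hds)) hs

theorem Polynomial.card_degreeLT (R : Type*) [Semiring R] (n : ℕ) :
    Nat.card (degreeLT R n) = Nat.card R ^ n := by
  rw [Nat.card_congr (degreeLTEquiv R n).toEquiv, Nat.card_fun, Nat.card_fin]

theorem Nat.mul_pred_ceil_div_lt {m n : ℕ} (hm : 0 < m) (hn : 0 < n) :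
    m * (⌈(n : ℚ) / m⌉₊ - 1) < n := by
  have hceil : ((⌈(n : ℚ) / m⌉₊ - 1 : ℕ) : ℚ) < n / m :=
    Nat.lt_ceil.mp (Nat.sub_lt (Nat.ceil_pos.mpr (by positivity)) one_pos)
  rw [lt_div_iff₀ (by exact_mod_cast hm)] at hceil
  exact_mod_cast (by rw [Nat.cast_mul]; linarith : ((m * (⌈(n : ℚ) / m⌉₊ - 1) : ℕ) : ℚ) < n)

theorem Nat.ceil_div_le_self {m n : ℕ} (hm : 0 < m) : ⌈(n : ℚ) / m⌉₊ ≤ n :=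
  Nat.ceil_le.mpr (_root_.div_le_self n.cast_nonneg (Nat.one_le_cast.mpr hm))

section

variable {F : Type} [Field F] [Fintype F] [DecidableEq F]

@[simp]
theorem mem_polyGraph {p : F[X]} {x : F × F} : x ∈ polyGraph p ↔ x.2 = p.eval x.1 := by
  simp only [polyGraph, mem_image, mem_univ, true_and]
  exact ⟨by rintro ⟨a, rfl⟩; rfl, fun h => ⟨x.1, by rw [← h]⟩⟩

theorem eval_eq_of_polyGraph_eq {p q : F[X]} (h : polyGraph p = polyGraph q) (a : F) :
    p.eval a = q.eval a := by
  exact (mem_polyGraph.mp (h ▸ mem_polyGraph.mpr rfl : (a, p.eval a) ∈ polyGraph q))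

theorem polyGraph_injOn_degreeLT {d : ℕ} (hd : d ≤ Fintype.card F) :
    Set.InjOn polyGraph (degreeLT F d : Set F[X]) := fun p hp q hq h => by
  rw [SetLike.mem_coe, mem_degreeLT] at hp hq
  have hdF : (d : WithBot ℕ) ≤ #(univ : Finset F) := by rw [card_univ]; exact_mod_cast hd
  exact eq_of_degrees_lt_of_eval_finset_eq univ (hp.trans_le hdF) (hq.trans_le hdF)
    fun a _ => eval_eq_of_polyGraph_eq h a

theorem card_le_sum_card_eval_eq_of_polyGraph_subset {ι : Type*} {s : Finset ι} {g : F[X]}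
    {f : ι → F[X]} (h : polyGraph g ⊆ s.biUnion fun i => polyGraph (f i)) :
    Fintype.card F ≤ ∑ i ∈ s, #{a | (f i).eval a = g.eval a} := by
  calc Fintype.card F = #(univ : Finset F) := card_univ.symm
    _ ≤ #(s.biUnion fun i => {a | (f i).eval a = g.eval a}) := by
      refine card_le_card fun a _ => ?_
      obtain ⟨i, hi, ha⟩ := mem_biUnion.mp (h (mem_polyGraph.mpr rfl : (a, g.eval a) ∈ _))
      exact mem_biUnion.mpr ⟨i, hi, by simpa [eq_comm] using ha⟩
    _ ≤ _ := card_biUnion_le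

theorem card_polyGraph_degreeLT {d : ℕ} (hd : d ≤ Fintype.card F) :
    Nat.card {s : Finset (F × F) // ∃ p : F[X], p.degree < d ∧ s = polyGraph p} =
      Fintype.card F ^ d := by
  have himage : {s : Finset (F × F) | ∃ p : F[X], p.degree < d ∧ s = polyGraph p} =
      polyGraph '' (degreeLT F d : Set F[X]) := by
    ext s; simp [mem_degreeLT, eq_comm]
  rw [← Set.coe_ofPred, himage, Nat.card_image_of_injOn (polyGraph_injOn_degreeLT hd),
    SetLike.coe_sort_coe, card_degreeLT, Nat.card_eq_fintype_card]

end

/-- Let `F` be a finite field with `q` elements (`q` a prime power), `k ≥ 2`, and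
`d = ⌈q/(k−1)⌉`. For any `k` pairwise distinct polynomials of degree `< d`
(here `g` together with `f_1, …, f_{k-1}`), the graph of `g` is not contained in
the union of the graphs of the other `k−1`; consequently the family
`{S_f : deg f < d}` is `(k−1)`-cover-free, and it has exactly `q^d` members. -/
theorem reed_solomon_cover_free (F : Type) [Field F] [Fintype F] [DecidableEq F]
    (k : ℕ) (hk : 2 ≤ k) (d : ℕ)
    (hd : d = ⌈(Fintype.card F : ℚ) / ((k : ℚ) - 1)⌉₊) :
    (∀ (g : Polynomial F) (f : Fin (k - 1) → Polynomial F),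
      Function.Injective f → (∀ i, f i ≠ g) →
      g.degree < (d : WithBot ℕ) → (∀ i, (f i).degree < (d : WithBot ℕ)) →
      ¬ polyGraph g ⊆ Finset.univ.biUnion (fun i => polyGraph (f i))) ∧
    Nat.card {s : Finset (F × F) //
        ∃ p : Polynomial F, p.degree < (d : WithBot ℕ) ∧ s = polyGraph p} =
      Fintype.card F ^ d := by
  have hm : 0 < k - 1 := by omega
  rw [← Nat.cast_one, ← Nat.cast_sub (by omega)] at hd
  refine ⟨fun g f _ hfg hg hf hcover => ?_, hd ▸ card_polyGraph_degreeLT (Nat.ceil_div_le_self hm)⟩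
  have hagree (i : Fin (k - 1)) : #{a | (f i).eval a = g.eval a} ≤ d - 1 :=
    Nat.le_sub_one_of_lt (card_lt_of_eval_eq_of_ne (hf i) hg (hfg i) (by simp))
  have hcovered : Fintype.card F ≤ (k - 1) * (d - 1) := by
    simpa using (card_le_sum_card_eval_eq_of_polyGraph_subset hcover).trans
      (sum_le_sum fun i _ => hagree i)
  have hsmall := hd ▸ Nat.mul_pred_ceil_div_lt hm (Fintype.card_pos (α := F))
  omega
end

section
/- For every integer k ≥ 1 and any k pairwise distinct points v_1, ..., v_k ∈ ℕ^k, there exists a coordinate d ∈ {1,...,k} such that the k points obtained by deleting the d-th coordinate from each v_i are pairwise distinct. -/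
/-!
If deleting coordinate `d` makes two of the points collide, those two points differ only in
coordinate `d`, so (after embedding `ℕ` into `ℚ`) their difference is a nonzero multiple of the
basis vector `e_d`. If this happened for every `d`, the vector span of the `k` points would contain
all of `e_1, …, e_k` and hence be all of `ℚ^k`; but the vector span of `k` points has dimension at
most `k - 1`.
-/

open Function Module

section

variable {K ι κ : Type*} [Field K] [DecidableEq κ]

theorem sub_eq_single_of_eqOn_compl_singleton {M : Type*} [AddGroup M] {x y : κ → M} {d : κ}
    (h : Set.EqOn x y {d}ᶜ) : x - y = Pi.single d (x d - y d) := by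
  funext j
  by_cases hj : j = d
  · subst hj
    simp
  · simp [Pi.single_eq_of_ne hj, h hj]

theorem single_one_mem_vectorSpan_of_eqOn_compl_singleton {p : ι → κ → K} {i i' : ι} {d : κ}
    (hne : p i ≠ p i') (h : Set.EqOn (p i) (p i') {d}ᶜ) :
    Pi.single d 1 ∈ vectorSpan K (Set.range p) := by
  have hmem : p i -ᵥ p i' ∈ vectorSpan K (Set.range p) :=
    vsub_mem_vectorSpan K (Set.mem_range_self i) (Set.mem_range_self i')
  rw [vsub_eq_sub, sub_eq_single_of_eqOn_compl_singleton h] at hmem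
  have hc : p i d - p i' d ≠ 0 := fun hc =>
    hne (sub_eq_zero.mp (by rw [sub_eq_single_of_eqOn_compl_singleton h, hc, Pi.single_zero]))
  simpa [← Pi.single_smul, hc] using Submodule.smul_mem _ (p i d - p i' d)⁻¹ hmem

theorem exists_injective_domRestrict_compl_singleton [Fintype ι] [Nonempty ι] [Fintype κ]
    {p : ι → κ → K} (hp : Injective p) (hcard : Fintype.card ι ≤ Fintype.card κ) :
    ∃ d : κ, Injective fun i => ({d}ᶜ : Set κ).domRestrict (p i) := by
  by_contra! h
  have hsingle (d : κ) : Pi.single d 1 ∈ vectorSpan K (Set.range p) := by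
    obtain ⟨i, i', heq, hne⟩ := not_injective_iff.mp (h d)
    exact single_one_mem_vectorSpan_of_eqOn_compl_singleton (hp.ne hne)
      fun j hj => congrFun heq ⟨j, hj⟩
  have htop : vectorSpan K (Set.range p) = ⊤ := by
    rw [eq_top_iff, ← (Pi.basisFun K κ).span_eq, Submodule.span_le]
    rintro _ ⟨d, rfl⟩
    simpa using hsingle d
  have hdim := finrank_vectorSpan_range_le K p (Nat.sub_one_add_one Fintype.card_ne_zero).symm
  rw [htop, finrank_top, finrank_fintype_fun_eq_card] at hdim
  have : 0 < Fintype.card ι := Fintype.card_pos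
  omega

end

/-- For every `k ≥ 1` (here `k = m + 1`) and any `k` pairwise distinct points
`v_1, …, v_k ∈ ℕ^k`, there is a coordinate `d` such that the `k` points obtained
by deleting the `d`-th coordinate from each `v_i` are pairwise distinct.
Deleting coordinate `d` from `v : Fin (m+1) → ℕ` is `v ∘ d.succAbove`. -/
theorem projection_lemma (m : ℕ) (v : Fin (m + 1) → (Fin (m + 1) → ℕ))
    (hv : Function.Injective v) :
    ∃ d : Fin (m + 1), Function.Injective (fun i => v i ∘ d.succAbove) := by
  have hcast : Injective fun i j => (v i j : ℚ) := fun i i' h =>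
    hv (funext fun j => Nat.cast_injective (congrFun h j))
  obtain ⟨d, hd⟩ := exists_injective_domRestrict_compl_singleton hcast le_rfl
  refine ⟨d, fun i i' h => hd (funext fun ⟨j, hj⟩ => ?_)⟩
  obtain ⟨t, rfl⟩ := Fin.exists_succAbove_eq hj
  simpa using congrFun h t
end

section
/- Let φ be a generalized P-encoding on n input variables in regular form. Then for all distinct i, j ∈ [n], the sets L_{φ,i} and L_{φ,j} are distinct. -/
/-- A generalized P-encoding on `n` input variables (the input variables being
`0, …, n-1`): (a) `φ ∧ x_i` is satisfiable for each input variable, and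
(b) `φ ⊨ ¬x_i ∨ ¬x_j` for all distinct input variables. -/
def GenPEncoding (n : ℕ) (φ : CNF) : Prop :=
  (∀ i < n, ∃ σ : Var → Bool, σ i = true ∧ CNF.sat σ φ) ∧
  (∀ i < n, ∀ j < n, i ≠ j →
    ∀ σ : Var → Bool, CNF.sat σ φ → ¬(σ i = true ∧ σ j = true))

/-- `Qset φ i` is the set of clauses of `φ` containing the literal `¬x_i`. -/
def Qset (φ : CNF) (i : ℕ) : Finset Clause :=
  φ.filter (fun C => ((i : Var), false) ∈ C)

/-- `φ` is prime if no CNF formula obtained from `φ` by removing a literal from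
one of its clauses is a generalized P-encoding on `n` input variables. -/
def PrimeEncoding (n : ℕ) (φ : CNF) : Prop :=
  GenPEncoding n φ ∧
  ∀ C ∈ φ, ∀ l ∈ C, ¬ GenPEncoding n (insert (C.erase l) (φ.erase C))

/-- Regular form: for each input variable `x_i`, `|Q_{φ,i}| = 2`, the only input
variable occurring in the clauses of `Q_{φ,i}` is `x_i`, and each clause of
`Q_{φ,i}` has exactly two literals. -/
def RegularForm (n : ℕ) (φ : CNF) : Prop :=
  ∀ i < n, (Qset φ i).card = 2 ∧
    (∀ C ∈ Qset φ i, ∀ l ∈ C, l.1 < n → l.1 = i) ∧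
    (∀ C ∈ Qset φ i, C.card = 2)

/-- `Lset φ i` is the set of literals `e` such that the clause `{¬x_i, e}`
belongs to `φ`. -/
def Lset (φ : CNF) (i : ℕ) : Set Lit :=
  {e | ({((i : Var), false), e} : Clause) ∈ φ}

/-!
If `L_{φ,i} = L_{φ,j}`, take a model `σ` of `φ` with `x_i` true. Every clause containing `¬x_j` is
`{¬x_j, e}` with `{¬x_i, e} ∈ φ`, so `σ` makes `e` true, and by regularity `e` is not a literal of
`x_j`. Hence setting `x_j` to true keeps `σ` a model, contradicting `φ ⊨ ¬x_i ∨ ¬x_j`.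
-/

theorem Finset.exists_eq_pair_of_mem_of_card_eq_two {α : Type*} [DecidableEq α] {s : Finset α}
    {a : α} (ha : a ∈ s) (hs : s.card = 2) : ∃ b, s = {a, b} := by
  obtain ⟨b, hb⟩ := Finset.card_eq_one.1 (by rw [Finset.card_erase_of_mem ha, hs])
  exact ⟨b, by rw [← hb, Finset.insert_erase ha]⟩

theorem Lit.eval_update_of_ne {σ : Var → Bool} {v : Var} {b : Bool} {l : Lit} (h : l.1 ≠ v) :
    Lit.eval (Function.update σ v b) l = Lit.eval σ l := by
  simp only [Lit.eval, Function.update_of_ne h]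

theorem Clause.eval_of_sat_pair_neg {σ : Var → Bool} {v : Var} {e : Lit}
    (hσ : Clause.sat σ {(v, false), e}) (hv : σ v = true) : Lit.eval σ e = true := by
  obtain ⟨l, hl, hlσ⟩ := hσ
  rcases Finset.mem_insert.1 hl with rfl | hl
  · simp [Lit.eval, hv] at hlσ
  · rwa [Finset.mem_singleton.1 hl] at hlσ

theorem CNF.sat.update_true {φ : CNF} {σ : Var → Bool} {v : Var} (hσ : CNF.sat σ φ)
    (hQ : ∀ C ∈ Qset φ v, ∃ l ∈ C, l.1 ≠ v ∧ Lit.eval σ l = true) :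
    CNF.sat (Function.update σ v true) φ := by
  intro C hC
  obtain ⟨l, hl, hlσ⟩ := hσ C hC
  by_cases hlv : l.1 = v
  · obtain ⟨w, _ | _⟩ := l
    · obtain ⟨e, he, hev, heσ⟩ := hQ C (Finset.mem_filter.2 ⟨hC, hlv ▸ hl⟩)
      exact ⟨e, he, (Lit.eval_update_of_ne hev).trans heσ⟩
    · exact ⟨(w, true), hl, by simp [Lit.eval, ← hlv]⟩
  · exact ⟨l, hl, (Lit.eval_update_of_ne hlv).trans hlσ⟩

namespace RegularForm

variable {n : ℕ} {φ : CNF}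

theorem eq_pair_of_mem_Qset (hreg : RegularForm n φ) {j : ℕ} (hj : j < n) {C : Clause}
    (hC : C ∈ Qset φ j) : ∃ e ∈ Lset φ j, C = {(j, false), e} := by
  obtain ⟨hCφ, hjC⟩ := Finset.mem_filter.1 hC
  obtain ⟨e, rfl⟩ := Finset.exists_eq_pair_of_mem_of_card_eq_two hjC ((hreg j hj).2.2 C hC)
  exact ⟨e, hCφ, rfl⟩

theorem fst_ne_of_mem_Lset (hreg : RegularForm n φ) {i j : ℕ} (hi : i < n) (hj : j < n)
    (hji : j ≠ i) {e : Lit} (he : e ∈ Lset φ i) : e.1 ≠ j := by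
  have hQ : ({(i, false), e} : Clause) ∈ Qset φ i := Finset.mem_filter.2 ⟨he, by simp⟩
  intro hej
  exact hji (hej ▸ (hreg i hi).2.1 _ hQ e (by simp) (hej ▸ hj))

end RegularForm

/-- Let `φ` be a generalized P-encoding on `n` input variables in regular form.
Then for all distinct `i, j ∈ [n]`, the sets `L_{φ,i}` and `L_{φ,j}` are
distinct. -/
theorem distinct_edges (n : ℕ) (φ : CNF)
    (h : GenPEncoding n φ) (hreg : RegularForm n φ)
    (i j : ℕ) (hi : i < n) (hj : j < n) (hij : i ≠ j) :
    Lset φ i ≠ Lset φ j := by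
  intro hL
  obtain ⟨σ, hσi, hσ⟩ := h.1 i hi
  have hQ : ∀ C ∈ Qset φ j, ∃ l ∈ C, l.1 ≠ j ∧ Lit.eval σ l = true := by
    intro C hC
    obtain ⟨e, he, rfl⟩ := hreg.eq_pair_of_mem_Qset hj hC
    rw [← hL] at he
    exact ⟨e, by simp, hreg.fst_ne_of_mem_Lset hi hj hij.symm he,
      Clause.eval_of_sat_pair_neg (hσ _ he) hσi⟩
  exact h.2 i hi j hj hij _ (hσ.update_true hQ)
    ⟨by simp [Function.update_of_ne hij, hσi], by simp⟩
end

section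
/- For every integer n ≥ 8, every generalized P-encoding φ on n input variables that is in regular form satisfies |φ| ≥ 2n + √(n+1) − 2. -/
/-!
Each input `x_i` occurs negatively exactly in the two clauses `{¬x_i, e}`, `e ∈ Lset φ i`, so
`|φ| = 2n + k` with `k` the number of clauses without negative input literals, and it suffices to
show `n + 1 ≤ (k + 2)²`. Regard each `Lset φ j` as an edge between two literals. If the edges of
inputs `i ≠ j` contain no complementary literals, overwrite a model of `φ ∧ x_i` by a model of
`φ ∧ x_j` on the variables of `x_j` and of `Lset φ j`. The result sets both `x_i` and `x_j`, so
it falsifies a clause; that clause has no negative input literal, and the complement of any of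
its literals satisfied by the first model lies in `Lset φ j`. Charging edges to these `k` clauses
bounds the degree of every literal by `max 2 (k + 1)`, and shows that the edges of all inputs
but `x_0` meet one of `k + 2` literals.
-/

open Finset

namespace Lit

lemma eval_negate_s18 (τ : Var → Bool) (l : Lit) : Lit.eval τ (Lit.negate l) = !Lit.eval τ l := by
  rcases l with ⟨v, _ | _⟩ <;> simp [Lit.eval, Lit.negate]

@[simp]
lemma negate_negate_s18 (l : Lit) : Lit.negate (Lit.negate l) = l := by
  simp [Lit.negate]

lemma eq_negate_of_fst_eq {τ : Var → Bool} {l e : Lit} (h : l.1 = e.1)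
    (hl : Lit.eval τ l = false) (he : Lit.eval τ e = true) : l = Lit.negate e := by
  rcases l with ⟨v, _ | _⟩ <;> rcases e with ⟨w, _ | _⟩ <;>
    simp_all [Lit.eval, Lit.negate]

lemma eval_piecewise (V : Set Var) [DecidablePred (· ∈ V)] (ρ σ : Var → Bool) (l : Lit) :
    Lit.eval (V.piecewise ρ σ) l = if l.1 ∈ V then Lit.eval ρ l else Lit.eval σ l := by
  by_cases hl : l.1 ∈ V <;> simp [Lit.eval, Set.piecewise, hl]

lemma eval_update_true {σ : Var → Bool} {l : Lit} {j : Var} (hl : Lit.eval σ l = true)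
    (hne : l ≠ (j, false)) : Lit.eval (Function.update σ j true) l = true := by
  rcases l with ⟨v, _ | _⟩
  · have hvj : v ≠ j := by rintro rfl; exact hne rfl
    simpa [Lit.eval, Function.update_of_ne hvj] using hl
  · by_cases hvj : v = j
    · simp [Lit.eval, hvj]
    · simpa [Lit.eval, Function.update_of_ne hvj] using hl

end Lit

lemma Finset.pair_right_injective {α : Type*} [DecidableEq α] (x : α) :
    Function.Injective (fun e : α => ({x, e} : Finset α)) := by
  intro e e' h
  have h' : ({x, e} : Set α) = {x, e'} := by
    simpa using congrArg (fun s : Finset α => (s : Set α)) h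
  rcases Set.pair_eq_pair_iff.mp h' with ⟨-, rfl⟩ | ⟨rfl, rfl⟩ <;> rfl

def negFreeClauses (n : ℕ) (φ : CNF) : Finset Clause :=
  φ.filter (fun C => ∀ m < n, ((m : Var), false) ∉ C)

namespace RegularForm

variable {n : ℕ} {φ : CNF} {i : ℕ}

lemma exists_eq_pair (hreg : RegularForm n φ) (hi : i < n) {C : Clause} (hC : C ∈ φ)
    (hiC : ((i : Var), false) ∈ C) : ∃ e ∈ Lset φ i, C = {((i : Var), false), e} := by
  obtain ⟨x, y, hxy, rfl⟩ := card_eq_two.mp ((hreg i hi).2.2 C (mem_filter.mpr ⟨hC, hiC⟩))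
  simp only [mem_insert, mem_singleton] at hiC
  rcases hiC with rfl | rfl
  · exact ⟨y, hC, rfl⟩
  · exact ⟨x, by simpa [Lset, pair_comm] using hC, pair_comm _ _⟩

lemma eq_true_of_mem_Lset (hreg : RegularForm n φ) (hi : i < n) {e : Lit} (he : e ∈ Lset φ i)
    (hen : e.1 < n) : e = ((i : Var), true) := by
  have hQ : ({((i : Var), false), e} : Clause) ∈ Qset φ i := mem_filter.mpr ⟨he, by simp⟩
  have hne : e ≠ ((i : Var), false) := by
    rintro rfl
    simpa using (hreg i hi).2.2 _ hQ
  have hvar : e.1 = i := (hreg i hi).2.1 _ hQ e (by simp) hen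
  rcases e with ⟨v, _ | _⟩ <;> simp_all

lemma ncard_Lset (hreg : RegularForm n φ) (hi : i < n) : (Lset φ i).ncard = 2 := by
  have himage : (fun e => ({((i : Var), false), e} : Clause)) '' Lset φ i = ↑(Qset φ i) := by
    ext C
    constructor
    · rintro ⟨e, he, rfl⟩
      exact mem_filter.mpr ⟨he, by simp⟩
    · intro hC
      obtain ⟨hCφ, hiC⟩ := mem_filter.mp hC
      obtain ⟨e, he, rfl⟩ := hreg.exists_eq_pair hi hCφ hiC
      exact ⟨e, he, rfl⟩
  rw [← Set.ncard_image_of_injective _ (Finset.pair_right_injective _), himage,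
    Set.ncard_coe_finset, (hreg i hi).1]

lemma Lset_eq_pair (hreg : RegularForm n φ) (hi : i < n) {u v : Lit} (hu : u ∈ Lset φ i)
    (hv : v ∈ Lset φ i) (huv : u ≠ v) : Lset φ i = {u, v} := by
  refine (Set.eq_of_subset_of_ncard_le ?_ ?_ ?_).symm
  · exact Set.insert_subset hu (Set.singleton_subset_iff.mpr hv)
  · rw [hreg.ncard_Lset hi, Set.ncard_pair huv]
  · exact Set.finite_of_ncard_ne_zero (by rw [hreg.ncard_Lset hi]; norm_num)

lemma sat_update (hreg : RegularForm n φ) (hi : i < n) {σ : Var → Bool} (hσ : CNF.sat σ φ)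
    (hL : ∀ e ∈ Lset φ i, Lit.eval σ e = true) : CNF.sat (Function.update σ i true) φ := by
  have hne : ∀ e ∈ Lset φ i, e ≠ ((i : Var), false) := by
    rintro e he rfl
    simpa using hreg.eq_true_of_mem_Lset hi he hi
  intro C hC
  by_cases hiC : ((i : Var), false) ∈ C
  · obtain ⟨e, he, rfl⟩ := hreg.exists_eq_pair hi hC hiC
    exact ⟨e, by simp, Lit.eval_update_true (hL e he) (hne e he)⟩
  · obtain ⟨l, hl, hlσ⟩ := hσ C hC
    exact ⟨l, hl, Lit.eval_update_true hlσ (by rintro rfl; exact hiC hl)⟩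

lemma card_eq (hreg : RegularForm n φ) : φ.card = 2 * n + (negFreeClauses n φ).card := by
  have hsplit : φ.filter (fun C => ¬ ∀ m < n, ((m : Var), false) ∉ C) =
      (range n).biUnion (Qset φ) := by
    ext C
    simp only [mem_filter, not_forall, not_not, exists_prop, mem_biUnion, mem_range, Qset]
    exact ⟨fun ⟨hC, m, hm, hmC⟩ => ⟨m, hm, hC, hmC⟩,
      fun ⟨m, hm, hC, hmC⟩ => ⟨hC, m, hm, hmC⟩⟩
  have hdisj : (↑(range n) : Set ℕ).PairwiseDisjoint (Qset φ) := by
    intro i hi j hj hij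
    refine disjoint_left.mpr fun C hCi hCj => hij ?_
    exact ((hreg i (mem_range.mp hi)).2.1 C hCi _ (mem_filter.mp hCj).2
      (mem_range.mp hj)).symm
  rw [← card_filter_add_card_filter_not (fun C => ¬ ∀ m < n, ((m : Var), false) ∉ C)]
  simp only [not_not]
  rw [hsplit, card_biUnion hdisj, sum_congr rfl fun i hi => (hreg i (mem_range.mp hi)).1]
  simp [negFreeClauses, mul_comm]

end RegularForm

lemma CNF.exists_clause_of_not_sat_piecewise {φ : CNF} {S : Set Lit} {ρ σ : Var → Bool}
    [DecidablePred (· ∈ Prod.fst '' S)] (hρ : ∀ e ∈ S, Lit.eval ρ e = true)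
    (hτ : ¬ CNF.sat ((Prod.fst '' S).piecewise ρ σ) φ) :
    ∃ C ∈ φ, ∀ l ∈ C, l ∉ S ∧ (Lit.eval σ l = true → Lit.negate l ∈ S) := by
  simp only [CNF.sat, Clause.sat, not_forall, not_exists, not_and, Bool.not_eq_true] at hτ
  obtain ⟨C, hC, hCτ⟩ := hτ
  refine ⟨C, hC, fun l hl => ⟨fun hlS => ?_, fun hlσ => ?_⟩⟩
  · have := hCτ l hl
    rw [Lit.eval_piecewise, if_pos (Set.mem_image_of_mem _ hlS), hρ l hlS] at this
    exact Bool.noConfusion this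
  · have hlτ := hCτ l hl
    rw [Lit.eval_piecewise] at hlτ
    split_ifs at hlτ with hlS
    · obtain ⟨e, he, hel⟩ := hlS
      rwa [Lit.eq_negate_of_fst_eq hel.symm hlτ (hρ e he), Lit.negate_negate_s18]
    · simp [hlσ] at hlτ

section Encoding

variable {n : ℕ} {φ : CNF} {i j : ℕ} {σ : Var → Bool}

lemma eval_of_mem_Lset (hσ : CNF.sat σ φ) (hσi : σ i = true) {e : Lit}
    (he : e ∈ Lset φ i) : Lit.eval σ e = true := by
  obtain ⟨l, hl, hlσ⟩ := hσ _ he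
  simp only [mem_insert, mem_singleton] at hl
  rcases hl with rfl | rfl
  · simp [Lit.eval, hσi] at hlσ
  · exact hlσ

namespace GenPEncoding

lemma eq_false (h : GenPEncoding n φ) (hσ : CNF.sat σ φ) (hi : i < n) (hσi : σ i = true)
    (hj : j < n) (hij : i ≠ j) : σ j = false :=
  Bool.eq_false_iff.mpr fun hσj => h.2 i hi j hj hij σ hσ ⟨hσi, hσj⟩

lemma negate_notMem_Lset (h : GenPEncoding n φ) (hi : i < n) {e : Lit} (he : e ∈ Lset φ i) :
    Lit.negate e ∉ Lset φ i := by
  intro hne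
  obtain ⟨σ, hσi, hσ⟩ := h.1 i hi
  have := eval_of_mem_Lset hσ hσi hne
  rw [Lit.eval_negate_s18, eval_of_mem_Lset hσ hσi he] at this
  exact Bool.false_ne_true this

lemma exists_eval_false (h : GenPEncoding n φ) (hreg : RegularForm n φ) (hi : i < n)
    (hj : j < n) (hij : i ≠ j) (hσ : CNF.sat σ φ) (hσi : σ i = true) :
    ∃ e ∈ Lset φ j, Lit.eval σ e = false := by
  by_contra! hall
  refine h.2 i hi j hj hij _ (hreg.sat_update hj hσ fun e he => ?_) ⟨?_, ?_⟩
  · simpa using hall e he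
  · rwa [Function.update_of_ne hij]
  · exact Function.update_self ..

lemma Lset_injOn (h : GenPEncoding n φ) (hreg : RegularForm n φ) :
    Set.InjOn (Lset φ) (Set.Iio n) := by
  intro i hi j hj hij
  by_contra hne
  obtain ⟨σ, hσi, hσ⟩ := h.1 i hi
  obtain ⟨e, he, heσ⟩ := h.exists_eval_false hreg hi hj hne hσ hσi
  simp [eval_of_mem_Lset hσ hσi (hij ▸ he)] at heσ

lemma exists_negFree_clause (h : GenPEncoding n φ) (hreg : RegularForm n φ) (hi : i < n)
    (hj : j < n) (hij : i ≠ j) (hσ : CNF.sat σ φ) (hσi : σ i = true)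
    (hcompl : ∀ e ∈ Lset φ j, Lit.negate e ∉ Lset φ i) :
    ∃ C ∈ negFreeClauses n φ,
      ∀ l ∈ C, Lit.eval σ l = true → Lit.negate l ∈ Lset φ j := by
  classical
  obtain ⟨ρ, hρj, hρ⟩ := h.1 j hj
  set S : Set Lit := insert ((j : Var), true) (Lset φ j)
  have hρS : ∀ e ∈ S, Lit.eval ρ e = true := by
    rintro e (rfl | he)
    · simpa [Lit.eval] using hρj
    · exact eval_of_mem_Lset hρ hρj he
  have hS_inputs : ∀ e ∈ S, e.1 < n → e.1 = j := by
    rintro e (rfl | he) hen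
    · rfl
    · rw [hreg.eq_true_of_mem_Lset hj he hen]
  have hiS : (i : Var) ∉ Prod.fst '' S := by
    rintro ⟨e, he, rfl⟩
    exact hij (hS_inputs e he hi)
  have hjS : (j : Var) ∈ Prod.fst '' S := ⟨_, Set.mem_insert _ _, rfl⟩
  have hτ : ¬ CNF.sat ((Prod.fst '' S).piecewise ρ σ) φ := fun hτ =>
    h.2 i hi j hj hij _ hτ ⟨by rw [Set.piecewise_eq_of_notMem _ _ _ hiS, hσi],
      by rw [Set.piecewise_eq_of_mem _ _ _ hjS, hρj]⟩
  obtain ⟨C, hC, hCS⟩ := CNF.exists_clause_of_not_sat_piecewise hρS hτ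
  have hneg : ∀ m < n, ((m : Var), false) ∉ C := by
    intro m hm hmC
    by_cases hmj : m = j
    · subst hmj
      obtain ⟨e, he, rfl⟩ := hreg.exists_eq_pair hm hC hmC
      exact (hCS e (by simp)).1 (Or.inr he)
    by_cases hmi : m = i
    · subst hmi
      obtain ⟨e, he, rfl⟩ := hreg.exists_eq_pair hm hC hmC
      rcases (hCS e (by simp)).2 (eval_of_mem_Lset hσ hσi he) with hej | hej
      · have hei := hreg.eq_true_of_mem_Lset hm he (congrArg Prod.fst hej ▸ hj)
        simp [hei, Lit.negate] at hej
      · exact hcompl _ hej (by rwa [Lit.negate_negate_s18])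
    · have hσm : Lit.eval σ ((m : Var), false) = true := by
        simpa [Lit.eval] using h.eq_false hσ hi hσi hm (Ne.symm hmi)
      exact hmj (hS_inputs _ ((hCS _ hmC).2 hσm) hm)
  refine ⟨C, mem_filter.mpr ⟨hC, hneg⟩, fun l hl hlσ => ?_⟩
  rcases (hCS l hl).2 hlσ with hlj | hlj
  · have : l = ((j : Var), false) := by simpa [Lit.negate] using congrArg Lit.negate hlj
    exact absurd (this ▸ hl) (hneg j hj)
  · exact hlj

end GenPEncoding

end Encoding

open Classical in
/-- Viewing each `Lset φ j` as an edge between two literals, the edges at `v`. -/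
noncomputable def incident (n : ℕ) (φ : CNF) (v : Lit) : Finset ℕ :=
  (range n).filter (fun j => v ∈ Lset φ j)

section Incidence

variable {n : ℕ} {φ : CNF} {v : Lit} {j : ℕ}

lemma mem_incident : j ∈ incident n φ v ↔ j < n ∧ v ∈ Lset φ j := by
  simp [incident]

namespace GenPEncoding

/-- Two edges `{v, e}` and `{v, ¬e}` at `v` would both be falsified by a witness of a third
input of `incident n φ v`, since that witness satisfies `v`. -/
lemma negate_notMem_Lset_of_mem_incident (h : GenPEncoding n φ) (hreg : RegularForm n φ)
    {s t : ℕ} (hs : s ∈ incident n φ v) (hj : j ∈ incident n φ v)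
    (ht : t ∈ incident n φ v) (hts : t ≠ s) (htj : t ≠ j) :
    ∀ e ∈ Lset φ j, Lit.negate e ∉ Lset φ s := by
  rw [mem_incident] at hs hj ht
  intro e he hes
  by_cases hev : e = v
  · subst hev
    exact h.negate_notMem_Lset hs.1 hs.2 hes
  by_cases hesv : Lit.negate e = v
  · exact h.negate_notMem_Lset hj.1 he (hesv ▸ hj.2)
  obtain ⟨σ, hσt, hσ⟩ := h.1 t ht.1
  have hσv := eval_of_mem_Lset hσ hσt ht.2
  obtain ⟨a, ha, haσ⟩ := h.exists_eval_false hreg ht.1 hs.1 hts hσ hσt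
  obtain ⟨b, hb, hbσ⟩ := h.exists_eval_false hreg ht.1 hj.1 htj hσ hσt
  rw [hreg.Lset_eq_pair hs.1 hs.2 hes (Ne.symm hesv)] at ha
  rw [hreg.Lset_eq_pair hj.1 hj.2 he (Ne.symm hev)] at hb
  rcases ha with rfl | rfl
  · simp [hσv] at haσ
  rcases hb with rfl | rfl
  · simp [hσv] at hbσ
  simp [Lit.eval_negate_s18, hbσ] at haσ

lemma card_incident_le (h : GenPEncoding n φ) (hreg : RegularForm n φ) (v : Lit) :
    (incident n φ v).card ≤ max 2 ((negFreeClauses n φ).card + 1) := by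
  rcases le_or_gt (incident n φ v).card 2 with hle | hlt
  · exact le_max_of_le_left hle
  refine le_max_of_le_right ?_
  obtain ⟨s, hs⟩ : (incident n φ v).Nonempty := card_pos.mp (by omega)
  have hs' := mem_incident.mp hs
  obtain ⟨σ, hσs, hσ⟩ := h.1 s hs'.1
  have hwit : ∀ j ∈ (incident n φ v).erase s, ∃ C ∈ negFreeClauses n φ,
      ∀ l ∈ C, Lit.eval σ l = true → Lit.negate l ∈ Lset φ j := by
    intro j hj
    obtain ⟨hjs, hj⟩ := mem_erase.mp hj
    obtain ⟨t, ht, hsjt⟩ := exists_mem_notMem_of_card_lt_card (card_le_two.trans_lt hlt)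
    rw [mem_insert, mem_singleton, not_or] at hsjt
    exact h.exists_negFree_clause hreg hs'.1 (mem_incident.mp hj).1 (Ne.symm hjs) hσ hσs
      (h.negate_notMem_Lset_of_mem_incident hreg hs hj ht hsjt.1 hsjt.2)
  choose! f hfR hf using hwit
  have hinj : Set.InjOn f ((incident n φ v).erase s) := by
    intro j₁ hj₁ j₂ hj₂ hf₁₂
    obtain ⟨l, hl, hlσ⟩ := hσ _ (mem_filter.mp (hfR j₁ hj₁)).1
    have hv : v ≠ Lit.negate l := by
      rintro rfl
      simpa [Lit.eval_negate_s18, hlσ] using eval_of_mem_Lset hσ hσs hs'.2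
    have hj₁' := mem_incident.mp (mem_of_mem_erase hj₁)
    have hj₂' := mem_incident.mp (mem_of_mem_erase hj₂)
    refine h.Lset_injOn hreg hj₁'.1 hj₂'.1 ?_
    rw [hreg.Lset_eq_pair hj₁'.1 hj₁'.2 (hf j₁ hj₁ l hl hlσ) hv,
      hreg.Lset_eq_pair hj₂'.1 hj₂'.2 (hf j₂ hj₂ l (hf₁₂ ▸ hl) hlσ) hv]
  have hcard := card_le_card_of_injOn f (fun j hj => hfR j hj) hinj
  rw [card_erase_of_mem hs] at hcard
  omega

end GenPEncoding

/-- Fix a witness `σ` of `x_0` with `Lset φ 0 = {a, b}`. Every other input `j` has an edge at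
`¬a` or `¬b`, or else some negation-free clause forces an edge at `¬u`, where `u` is the
literal by which `σ` satisfies that clause. -/
lemma GenPEncoding.sub_one_le (h : GenPEncoding n φ) (hreg : RegularForm n φ) (hn : 0 < n) :
    n - 1 ≤ ((negFreeClauses n φ).card + 2) * max 2 ((negFreeClauses n φ).card + 1) := by
  obtain ⟨σ, hσ0, hσ⟩ := h.1 0 hn
  obtain ⟨a, b, -, hab⟩ := Set.ncard_eq_two.mp (hreg.ncard_Lset hn)
  choose! u hu hσu using show ∀ C ∈ φ, ∃ l ∈ C, Lit.eval σ l = true from hσ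
  have hcover : (range n).erase 0 ⊆
      (incident n φ (Lit.negate a) ∪ incident n φ (Lit.negate b)) ∪
      (negFreeClauses n φ).biUnion (fun C => incident n φ (Lit.negate (u C))) := by
    intro j hj
    obtain ⟨hj0, hj⟩ := mem_erase.mp hj
    rw [mem_range] at hj
    by_cases hjab : Lit.negate a ∈ Lset φ j ∨ Lit.negate b ∈ Lset φ j
    · refine mem_union_left _ ?_
      simpa only [mem_union, mem_incident, hj, true_and] using hjab
    have hcompl : ∀ e ∈ Lset φ j, Lit.negate e ∉ Lset φ 0 := by
      intro e he hea
      rw [hab] at hea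
      rcases hea with hea | hea <;>
        exact hjab (by rw [← hea, Lit.negate_negate_s18]; simp [he])
    obtain ⟨C, hC, hCl⟩ := h.exists_negFree_clause hreg hn hj (Ne.symm hj0) hσ hσ0 hcompl
    have hCφ := (mem_filter.mp hC).1
    exact mem_union_right _ (mem_biUnion.mpr
      ⟨C, hC, mem_incident.mpr ⟨hj, hCl _ (hu C hCφ) (hσu C hCφ)⟩⟩)
  set k := (negFreeClauses n φ).card
  have hdeg := h.card_incident_le hreg
  calc n - 1 = ((range n).erase 0).card := by
        rw [card_erase_of_mem (mem_range.mpr hn), card_range]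
    _ ≤ _ := card_le_card hcover
    _ ≤ (max 2 (k + 1) + max 2 (k + 1)) + k * max 2 (k + 1) :=
      (card_union_le _ _).trans <| add_le_add
        ((card_union_le _ _).trans (add_le_add (hdeg _) (hdeg _)))
        (card_biUnion_le_card_mul _ _ _ fun C _ => hdeg _)
    _ = (k + 2) * max 2 (k + 1) := by ring

end Incidence

/-- For every `n ≥ 8`, every generalized P-encoding `φ` on `n` input variables
in regular form satisfies `|φ| ≥ 2n + √(n+1) − 2`. -/
theorem regular_lower_bound (n : ℕ) (hn : 8 ≤ n) (φ : CNF)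
    (h : GenPEncoding n φ) (hreg : RegularForm n φ) :
    2 * (n : ℝ) + Real.sqrt ((n : ℝ) + 1) - 2 ≤ (φ.card : ℝ) := by
  have hcount := h.sub_one_le hreg (by omega)
  set k := (negFreeClauses n φ).card
  have hk : 1 ≤ k := by
    by_contra! hk
    rw [Nat.lt_one_iff.mp hk, show (0 + 2) * max 2 (0 + 1) = 4 from rfl] at hcount
    omega
  rw [max_eq_right (by omega)] at hcount
  have hsq : (n : ℝ) + 1 ≤ ((k : ℝ) + 2) ^ 2 := by
    have : n + 1 ≤ (k + 2) ^ 2 := by nlinarith [Nat.sub_add_cancel (by omega : 1 ≤ n)]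
    exact_mod_cast this
  have hsqrt : Real.sqrt ((n : ℝ) + 1) ≤ k + 2 := Real.sqrt_le_iff.mpr ⟨by positivity, hsq⟩
  rw [hreg.card_eq]
  push_cast
  linarith
end
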